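/- arXiv:2506.15551 — 9 statements merged into one kernel-verified Lean document; each statement's English description precedes it below -/
import Mathlib

section
/- Let H be a complex Hilbert space, V : H → H a unitary operator (surjective linear isometry), and let P and Q be orthogonal projections on H. Let p be a real number with 0 < p < 1 and let w₀ ∈ H be a unit vector such that Q w₀ = w₀ and Q (V† (P (V w₀))) = p • w₀. Then there exist unit vectors w₁, s₀, s₁ ∈ H such that Q w₁ = 0, P s₀ = 0, P s₁ = s₁, V w₀ = √(1−p) • s₀ + √p • s₁, and V w₁ = √p • s₀ − √(1−p) • s₁. -/
open scoped InnerProductSpace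

/-!
Put `u = V w₀`. Since `Q w₀ = w₀`, the eigenvalue equation gives
`‖P u‖² = ⟪w₀, Q V† P V w₀⟫ = p`, so `s₁ = P u / √p` and `s₀ = (u - P u) / √(1 - p)` are unit
vectors in the range and the kernel of `P`, with `u = √(1 - p) s₀ + √p s₁`. The orthogonal vector
`t = √p s₀ - √(1 - p) s₁` equals `(p u - P u) / √(p (1 - p))`, so
`w₁ = V† t = (p w₀ - V† P V w₀) / √(p (1 - p))` is killed by `Q`, again by the eigenvalue equation.
-/

namespace IsStarProjection

variable {𝕜 E F : Type*} [RCLike 𝕜] [NormedAddCommGroup E] [InnerProductSpace 𝕜 E]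
  [CompleteSpace E] [NormedAddCommGroup F] [InnerProductSpace 𝕜 F] [CompleteSpace F]
  {P : E →L[𝕜] E}

theorem apply_apply (hP : IsStarProjection P) (x : E) : P (P x) = P x :=
  congr($(hP.isIdempotentElem.eq) x)

theorem inner_apply_left (hP : IsStarProjection P) (x y : E) : ⟪P x, y⟫_𝕜 = ⟪x, P y⟫_𝕜 :=
  ContinuousLinearMap.isSelfAdjoint_iff_isSymmetric.mp hP.isSelfAdjoint x y

theorem inner_apply_self_eq_norm_sq (hP : IsStarProjection P) (x : E) :
    ⟪x, P x⟫_𝕜 = (‖P x‖ : 𝕜) ^ 2 := by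
  rw [← inner_self_eq_norm_sq_to_K, hP.inner_apply_left, hP.apply_apply]

theorem norm_sq_eq_norm_sq_apply_add_norm_sq_sub (hP : IsStarProjection P) (x : E) :
    ‖x‖ ^ 2 = ‖P x‖ ^ 2 + ‖x - P x‖ ^ 2 := by
  have horth : ⟪P x, x - P x⟫_𝕜 = 0 := by
    rw [inner_sub_right, hP.inner_apply_left x x, hP.inner_apply_left x (P x), hP.apply_apply,
      sub_self]
  simpa only [sq, add_sub_cancel] using
    norm_add_sq_eq_norm_sq_add_norm_sq_of_inner_eq_zero _ _ horth

theorem norm_sqrt_smul_sub_sqrt_smul {s₀ s₁ : E} (hP : IsStarProjection P) (hs₀ : ‖s₀‖ = 1)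
    (hs₁ : ‖s₁‖ = 1) (hPs₀ : P s₀ = 0) (hPs₁ : P s₁ = s₁) {p : ℝ} (hp0 : 0 ≤ p) (hp1 : p ≤ 1) :
    ‖(√p : 𝕜) • s₀ - (√(1 - p) : 𝕜) • s₁‖ = 1 := by
  have hP_apply : P ((√p : 𝕜) • s₀ - (√(1 - p) : 𝕜) • s₁) = -((√(1 - p) : 𝕜) • s₁) := by
    simp [hPs₀, hPs₁]
  have hsq := hP.norm_sq_eq_norm_sq_apply_add_norm_sq_sub ((√p : 𝕜) • s₀ - (√(1 - p) : 𝕜) • s₁)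
  rw [hP_apply, sub_neg_eq_add, sub_add_cancel, norm_neg, norm_smul, norm_smul, hs₀, hs₁,
    RCLike.norm_ofReal, RCLike.norm_ofReal, mul_one, mul_one, sq_abs, sq_abs,
    Real.sq_sqrt hp0, Real.sq_sqrt (sub_nonneg.mpr hp1), sub_add_cancel] at hsq
  rwa [← pow_eq_one_iff_of_nonneg (norm_nonneg _) two_ne_zero]

theorem exists_orthonormal_split {u : E} (hP : IsStarProjection P) (hu : ‖u‖ = 1) {p : ℝ}
    (hp0 : 0 < p) (hp1 : p < 1) (hPu : ‖P u‖ ^ 2 = p) :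
    ∃ s₀ s₁ : E, ‖s₀‖ = 1 ∧ ‖s₁‖ = 1 ∧ P s₀ = 0 ∧ P s₁ = s₁ ∧
      u = (√(1 - p) : 𝕜) • s₀ + (√p : 𝕜) • s₁ ∧
      (√(p * (1 - p)) : 𝕜) • ((√p : 𝕜) • s₀ - (√(1 - p) : 𝕜) • s₁) = (p : 𝕜) • u - P u := by
  have ha : 0 < √p := Real.sqrt_pos.mpr hp0
  have hb : 0 < √(1 - p) := Real.sqrt_pos.mpr (sub_pos.mpr hp1)
  have hnorm_apply : ‖P u‖ = √p := by rw [← hPu, Real.sqrt_sq (norm_nonneg _)]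
  have hnorm_sub : ‖u - P u‖ = √(1 - p) := by
    have hsq := hP.norm_sq_eq_norm_sq_apply_add_norm_sq_sub u
    rw [hu, hPu] at hsq
    rw [← Real.sqrt_sq (norm_nonneg (u - P u))]
    congr 1
    linarith
  have hunit {x : E} {r : ℝ} (hr : 0 < r) (hx : ‖x‖ = r) : ‖(r : 𝕜)⁻¹ • x‖ = 1 := by
    rw [norm_smul, norm_inv, RCLike.norm_ofReal, abs_of_pos hr, hx, inv_mul_cancel₀ hr.ne']
  have ha' : (√p : 𝕜) ≠ 0 := RCLike.ofReal_ne_zero.mpr ha.ne'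
  have hb' : (√(1 - p) : 𝕜) ≠ 0 := RCLike.ofReal_ne_zero.mpr hb.ne'
  refine ⟨(√(1 - p) : 𝕜)⁻¹ • (u - P u), (√p : 𝕜)⁻¹ • P u, hunit hb hnorm_sub,
    hunit ha hnorm_apply, by simp [hP.apply_apply], by simp [hP.apply_apply], ?_, ?_⟩
  · rw [smul_inv_smul₀ hb', smul_inv_smul₀ ha', sub_add_cancel]
  · have hpa : (√p : 𝕜) ^ 2 = p := by exact_mod_cast Real.sq_sqrt hp0.le
    have hpb : (√(1 - p) : 𝕜) ^ 2 = 1 - p := by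
      exact_mod_cast Real.sq_sqrt (sub_pos.mpr hp1).le
    rw [Real.sqrt_mul hp0.le]
    match_scalars <;> field_simp
    · exact hpa
    · linear_combination -hpa - hpb

theorem norm_sq_apply_map_eq_inner (V : F ≃ₗᵢ[𝕜] E) (hP : IsStarProjection P) {Q : F →L[𝕜] F}
    (hQ : IsSelfAdjoint Q) {w : F} (hQw : Q w = w) :
    (‖P (V w)‖ : 𝕜) ^ 2 = ⟪w, Q (V.symm (P (V w)))⟫_𝕜 := by
  calc (‖P (V w)‖ : 𝕜) ^ 2 = ⟪V w, P (V w)⟫_𝕜 := (hP.inner_apply_self_eq_norm_sq _).symm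
    _ = ⟪w, V.symm (P (V w))⟫_𝕜 := by rw [← V.inner_map_map, V.apply_symm_apply]
    _ = ⟪Q w, V.symm (P (V w))⟫_𝕜 := by rw [hQw]
    _ = ⟪w, Q (V.symm (P (V w)))⟫_𝕜 := ContinuousLinearMap.isSelfAdjoint_iff_isSymmetric.mp hQ _ _

end IsStarProjection

theorem stmt_0_general {H : Type*} [NormedAddCommGroup H] [InnerProductSpace ℂ H] [CompleteSpace H]
    (V : H ≃ₗᵢ[ℂ] H) (P Q : H →L[ℂ] H)
    (hP : IsSelfAdjoint P) (hP2 : IsIdempotentElem P)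
    (hQ : IsSelfAdjoint Q)
    (p : ℝ) (hp0 : 0 < p) (hp1 : p < 1)
    (w₀ : H) (hw₀ : ‖w₀‖ = 1) (hQw₀ : Q w₀ = w₀)
    (heig : Q (V.symm (P (V w₀))) = (p : ℂ) • w₀) :
    ∃ w₁ s₀ s₁ : H, ‖w₁‖ = 1 ∧ ‖s₀‖ = 1 ∧ ‖s₁‖ = 1 ∧
      Q w₁ = 0 ∧ P s₀ = 0 ∧ P s₁ = s₁ ∧
      V w₀ = (Real.sqrt (1 - p) : ℂ) • s₀ + (Real.sqrt p : ℂ) • s₁ ∧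
      V w₁ = (Real.sqrt p : ℂ) • s₀ - (Real.sqrt (1 - p) : ℂ) • s₁ := by
  have hPproj : IsStarProjection P := ⟨hP2, hP⟩
  have hPVw₀ : ‖P (V w₀)‖ ^ 2 = p := by
    have hinner := hPproj.norm_sq_apply_map_eq_inner V hQ hQw₀
    rw [heig, inner_smul_right, inner_self_eq_norm_sq_to_K, hw₀] at hinner
    have hcast : ((‖P (V w₀)‖ ^ 2 : ℝ) : ℂ) = p := by simpa using hinner
    exact_mod_cast hcast
  obtain ⟨s₀, s₁, hs₀, hs₁, hPs₀, hPs₁, hVw₀, hrewind⟩ :=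
    hPproj.exists_orthonormal_split (by rwa [V.norm_map]) hp0 hp1 hPVw₀
  refine ⟨V.symm ((√p : ℂ) • s₀ - (√(1 - p) : ℂ) • s₁), s₀, s₁, ?_, hs₀, hs₁, ?_, hPs₀, hPs₁,
    hVw₀, V.apply_symm_apply _⟩
  · rw [V.symm.norm_map]
    exact hPproj.norm_sqrt_smul_sub_sqrt_smul hs₀ hs₁ hPs₀ hPs₁ hp0.le hp1.le
  · have hc : (√(p * (1 - p)) : ℂ) ≠ 0 := by
      exact_mod_cast (Real.sqrt_pos.mpr (mul_pos hp0 (sub_pos.mpr hp1))).ne'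
    -- `hrewind` casts through `RCLike.ofReal`; `rw` needs the syntactic `Complex.ofReal` of `hc`.
    rw [RCLike.ofReal_eq_complex_ofReal] at hrewind
    refine (smul_eq_zero_iff_right hc).mp ?_
    rw [← ContinuousLinearMap.map_smul, ← LinearIsometryEquiv.map_smul, hrewind, map_sub, map_smul,
      V.symm_apply_apply, map_sub, map_smul, hQw₀, heig, sub_self]

theorem stmt_0 {H : Type*} [NormedAddCommGroup H] [InnerProductSpace ℂ H] [CompleteSpace H]
    (V : H ≃ₗᵢ[ℂ] H) (P Q : H →L[ℂ] H)
    (hP : IsSelfAdjoint P) (hP2 : IsIdempotentElem P)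
    (hQ : IsSelfAdjoint Q) (hQ2 : IsIdempotentElem Q)
    (p : ℝ) (hp0 : 0 < p) (hp1 : p < 1)
    (w₀ : H) (hw₀ : ‖w₀‖ = 1) (hQw₀ : Q w₀ = w₀)
    (heig : Q (V.symm (P (V w₀))) = (p : ℂ) • w₀) :
    ∃ w₁ s₀ s₁ : H, ‖w₁‖ = 1 ∧ ‖s₀‖ = 1 ∧ ‖s₁‖ = 1 ∧
      Q w₁ = 0 ∧ P s₀ = 0 ∧ P s₁ = s₁ ∧
      V w₀ = (Real.sqrt (1 - p) : ℂ) • s₀ + (Real.sqrt p : ℂ) • s₁ ∧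
      V w₁ = (Real.sqrt p : ℂ) • s₀ - (Real.sqrt (1 - p) : ℂ) • s₁ :=
  stmt_0_general V P Q hP hP2 hQ p hp0 hp1 w₀ hw₀ hQw₀ heig
end

section
/- Let D and ℓ be natural numbers with 0 < ℓ < D. For every unit vector ψ in the Euclidean space ℂ^D there exist a natural number k with k ≤ D − ℓ and a unit vector φ ∈ ℂ^D such that φ_d = 0 for every index d with k ≤ d < k + ℓ, and |⟨φ, ψ⟩| ≥ √(1 − ℓ/(D − ℓ)). -/
/-!
Split the coordinates into the `⌊D/ℓ⌋` disjoint windows `[jℓ, jℓ + ℓ)`. Their masses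
`∑ |ψ_d|²` add up to at most `1`, so some window carries mass `w ≤ 1/⌊D/ℓ⌋ ≤ ℓ/(D - ℓ)`.
Erasing `ψ` on that window gives a vector `P` with `⟪P, ψ⟫ = ‖P‖² = 1 - w`, and
`φ = P/‖P‖` satisfies `|⟪φ, ψ⟫| = ‖P‖ = √(1 - w)`.
-/

open scoped InnerProductSpace

theorem Submodule.exists_norm_eq_one_norm_le_norm_inner {𝕜 E : Type*} [RCLike 𝕜]
    [NormedAddCommGroup E] [InnerProductSpace 𝕜 E] {K : Submodule 𝕜 E} (hK : K ≠ ⊥)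
    {p : E} (hp : p ∈ K) (ψ : E) (hpψ : ⟪p, ψ⟫_𝕜 = ⟪p, p⟫_𝕜) :
    ∃ φ ∈ K, ‖φ‖ = 1 ∧ ‖p‖ ≤ ‖⟪φ, ψ⟫_𝕜‖ := by
  by_cases hp0 : p = 0
  · obtain ⟨x, hxK, hx0⟩ := (Submodule.ne_bot_iff K).mp hK
    exact ⟨(‖x‖⁻¹ : 𝕜) • x, K.smul_mem _ hxK, norm_smul_inv_norm hx0, by simp [hp0]⟩
  · refine ⟨(‖p‖⁻¹ : 𝕜) • p, K.smul_mem _ hp, norm_smul_inv_norm hp0, le_of_eq ?_⟩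
    rw [inner_smul_left, hpψ, inner_self_eq_norm_sq_to_K, norm_mul, norm_pow]
    simp only [map_inv₀, RCLike.conj_ofReal, norm_inv, RCLike.norm_ofReal, abs_norm]
    field_simp

namespace EuclideanSpace

variable {𝕜 ι : Type*} [RCLike 𝕜]

def vanishingOn (s : Finset ι) : Submodule 𝕜 (EuclideanSpace 𝕜 ι) where
  carrier := {φ | ∀ i ∈ s, φ i = 0}
  add_mem' hφ hχ i hi := by simp [hφ i hi, hχ i hi]
  zero_mem' _ _ := rfl
  smul_mem' c φ hφ i hi := by simp [hφ i hi]

variable [DecidableEq ι]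

theorem vanishingOn_ne_bot {s : Finset ι} {i : ι} (hi : i ∉ s) :
    vanishingOn (𝕜 := 𝕜) s ≠ ⊥ := by
  refine (Submodule.ne_bot_iff _).mpr ⟨single i 1, fun j hj => ?_, by simp⟩
  simp [show j ≠ i from fun h => hi (h ▸ hj)]

def eraseCoords (s : Finset ι) (ψ : EuclideanSpace 𝕜 ι) : EuclideanSpace 𝕜 ι :=
  WithLp.toLp 2 fun i => if i ∈ s then 0 else ψ i

theorem eraseCoords_mem_vanishingOn (s : Finset ι) (ψ : EuclideanSpace 𝕜 ι) :
    eraseCoords s ψ ∈ vanishingOn s := fun i hi => by simp [eraseCoords, hi]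

variable [Fintype ι]

theorem inner_eraseCoords_self (s : Finset ι) (ψ : EuclideanSpace 𝕜 ι) :
    ⟪eraseCoords s ψ, ψ⟫_𝕜 = ⟪eraseCoords s ψ, eraseCoords s ψ⟫_𝕜 := by
  simp only [PiLp.inner_apply]
  refine Finset.sum_congr rfl fun i _ => ?_
  by_cases hi : i ∈ s <;> simp [eraseCoords, hi]

theorem norm_eraseCoords_sq (s : Finset ι) (ψ : EuclideanSpace 𝕜 ι) :
    ‖eraseCoords s ψ‖ ^ 2 = ‖ψ‖ ^ 2 - ∑ i ∈ s, ‖ψ i‖ ^ 2 := by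
  rw [norm_sq_eq, norm_sq_eq, eq_sub_iff_add_eq,
    ← Finset.sum_compl_add_sum s fun i => ‖ψ i‖ ^ 2]
  congr 1
  simp [eraseCoords, apply_ite, Finset.sum_ite, Finset.compl_eq_univ_sdiff, Finset.filter_not]

theorem exists_norm_eq_one_vanishingOn_le_norm_inner {s : Finset ι} (hs : ∃ i, i ∉ s)
    (ψ : EuclideanSpace 𝕜 ι) :
    ∃ φ ∈ vanishingOn s, ‖φ‖ = 1 ∧ √(‖ψ‖ ^ 2 - ∑ i ∈ s, ‖ψ i‖ ^ 2) ≤ ‖⟪φ, ψ⟫_𝕜‖ := by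
  obtain ⟨i, hi⟩ := hs
  rw [← norm_eraseCoords_sq, Real.sqrt_sq (norm_nonneg _)]
  exact Submodule.exists_norm_eq_one_norm_le_norm_inner (vanishingOn_ne_bot hi)
    (eraseCoords_mem_vanishingOn s ψ) ψ (inner_eraseCoords_self s ψ)

end EuclideanSpace

theorem inv_cast_div_le_div_sub {D ℓ : ℕ} (hℓ : 0 < ℓ) (hD : ℓ < D) :
    ((D / ℓ : ℕ) : ℝ)⁻¹ ≤ ℓ / (D - ℓ) := by
  have hm : (0 : ℝ) < (D / ℓ : ℕ) := by exact_mod_cast Nat.div_pos hD.le hℓ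
  have hDℓ : (0 : ℝ) < D - ℓ := by rw [sub_pos]; exact_mod_cast hD
  have hlt : (D : ℝ) < (D / ℓ : ℕ) * ℓ + ℓ := by exact_mod_cast Nat.lt_div_mul_add hℓ
  rw [inv_eq_one_div, div_le_div_iff₀ hm hDℓ]
  linarith

theorem stmt_2 (D ℓ : ℕ) (hℓ : 0 < ℓ) (hD : ℓ < D)
    (ψ : EuclideanSpace ℂ (Fin D)) (hψ : ‖ψ‖ = 1) :
    ∃ k ≤ D - ℓ, ∃ φ : EuclideanSpace ℂ (Fin D), ‖φ‖ = 1 ∧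
      (∀ d : Fin D, k ≤ (d : ℕ) → (d : ℕ) < k + ℓ → φ d = 0) ∧
      Real.sqrt (1 - (ℓ : ℝ) / ((D : ℝ) - (ℓ : ℝ))) ≤ ‖⟪φ, ψ⟫_ℂ‖ := by
  set m := D / ℓ
  have hm : 0 < m := Nat.div_pos hD.le hℓ
  obtain ⟨j, hjm, hmass⟩ := Finset.exists_sum_fiber_le_of_sum_fiber_nonneg_of_sum_le_nsmul
    (s := .univ) (t := .range m) (f := fun d : Fin D => (d : ℕ) / ℓ) (w := fun d => ‖ψ d‖ ^ 2)
    (b := (m : ℝ)⁻¹) (fun _ _ => by positivity) (by simpa using hm.ne')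
    (by simp [← EuclideanSpace.norm_sq_eq, hψ, hm.ne'])
  have hwindow (d : Fin D) : (d : ℕ) / ℓ = j ↔ j * ℓ ≤ d ∧ d < j * ℓ + ℓ := by
    rw [Nat.div_eq_iff hℓ]; omega
  have houtside : ∃ d : Fin D, (d : ℕ) / ℓ ≠ j := by
    rcases Nat.eq_zero_or_pos j with rfl | hj
    · exact ⟨⟨ℓ, hD⟩, by simp [Nat.div_self hℓ]⟩
    · exact ⟨⟨0, hℓ.trans hD⟩, by simp [hj.ne]⟩
  obtain ⟨φ, hφ, hφ1, hφψ⟩ := EuclideanSpace.exists_norm_eq_one_vanishingOn_le_norm_inner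
    (s := {d : Fin D | (d : ℕ) / ℓ = j}) (by simpa using houtside) ψ
  refine ⟨j * ℓ, ?_, φ, hφ1, fun d h₁ h₂ => hφ d (by simp [hwindow, h₁, h₂]), le_trans ?_ hφψ⟩
  · have hm_mul : m * ℓ ≤ D := Nat.div_mul_le_self D ℓ
    have hj_mul : (j + 1) * ℓ ≤ m * ℓ := Nat.mul_le_mul_right ℓ (Finset.mem_range.mp hjm)
    rw [add_one_mul] at hj_mul
    omega
  · rw [hψ, one_pow]
    gcongr
    exact hmass.trans (inv_cast_div_le_div_sub hℓ hD)
end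

section
/- Let p be a real number with 1/2 < p < 1, and set γ = (1−p)/p and q = p²/(p² + (1−p)²). Define Ψ ∈ ℓ²(ℕ × Bool) by Ψ(d, false) = √(1−γ²)·γ^d·√(1−q) and Ψ(d, true) = √(1−γ²)·γ^d·√q for all d ∈ ℕ. Then Ψ is a unit vector, and Ψ lies in the topological closure of the linear span of the set consisting of the vector δ_{(0,true)} together with the vectors (δ_{(d,false)} + δ_{(d+1,true)})/√2 for all d ∈ ℕ. -/
/-!
Because `1 - q = γ² q`, the coordinates of `Ψ` satisfy `Ψ (d + 1, true) = Ψ (d, false)`. Expanding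
`Ψ` in the standard basis and pairing `δ (d, false)` with `δ (d + 1, true)` therefore writes `Ψ` as
`Ψ (0, true) • δ (0, true)` plus a convergent series of multiples of the vectors
`δ (d, false) + δ (d + 1, true)`. The squared norm is the geometric series
`(1 - γ²) ∑ γ^(2d) ((1 - q) + q) = 1`.
-/

open ENNReal

section Regroup

variable {E : Type*} [NormedAddCommGroup E] [CompleteSpace E] {p : ℝ≥0∞} [Fact (1 ≤ p)]

theorem lp.hasSum_single_false_add_single_succ_true (hp : p ≠ ⊤)
    (f : lp (fun _ : ℕ × Bool => E) p) :
    HasSum (fun d : ℕ => lp.single p (d, false) (f (d, false)) +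
        lp.single p (d + 1, true) (f (d + 1, true)))
      (f - lp.single p (0, true) (f (0, true))) := by
  have hf := lp.hasSum_single hp f
  set w : ℕ → lp (fun _ : ℕ × Bool => E) p := fun d => lp.single p (d, true) (f (d, true))
  have hfibers : HasSum (fun d => lp.single p (d, false) (f (d, false)) + w d) f :=
    hf.prod_fiberwise fun d => by
      simpa [Fintype.sum_bool, add_comm] using
        hasSum_fintype fun b => lp.single (E := fun _ : ℕ × Bool => E) p (d, b) (f (d, b))
  have hw : HasSum w (∑' d, w d) :=
    (hf.summable.comp_injective (i := fun d : ℕ => (d, true))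
      fun _ _ h => (Prod.mk.inj h).1).hasSum
  have hshift : HasSum (fun d => w (d + 1)) (∑' d, w d - w 0) := by
    simpa using (hasSum_nat_add_iff' 1).2 hw
  convert (hfibers.sub hw).add hshift using 1
  · funext d; abel
  · abel

end Regroup

section ClosedSpan

variable {𝕜 : Type*} [NormedField 𝕜] [CompleteSpace 𝕜] {p : ℝ≥0∞} [Fact (1 ≤ p)]

theorem lp.mem_closure_span_of_apply_succ_true (hp : p ≠ ⊤) {c : 𝕜} (hc : c ≠ 0)
    (f : lp (fun _ : ℕ × Bool => 𝕜) p) (hf : ∀ d : ℕ, f (d + 1, true) = f (d, false)) :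
    f ∈ closure (↑(Submodule.span 𝕜 (({lp.single p ((0 : ℕ), true) (1 : 𝕜)} ∪
      {v | ∃ d : ℕ, v = c • (lp.single p (d, false) (1 : 𝕜) + lp.single p (d + 1, true) 1)}) :
        Set (lp (fun _ : ℕ × Bool => 𝕜) p))) : Set (lp (fun _ : ℕ × Bool => 𝕜) p)) := by
  set K := Submodule.span 𝕜 (({lp.single p ((0 : ℕ), true) (1 : 𝕜)} ∪
      {v | ∃ d : ℕ, v = c • (lp.single p (d, false) (1 : 𝕜) + lp.single p (d + 1, true) 1)}) :
        Set (lp (fun _ : ℕ × Bool => 𝕜) p))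
  have hsingle (x : ℕ × Bool) (a : 𝕜) :
      lp.single (E := fun _ : ℕ × Bool => 𝕜) p x a = a • lp.single p x 1 := by
    rw [← lp.single_smul, smul_eq_mul, mul_one]
  have hhead : lp.single p (0, true) (f (0, true)) ∈ K.topologicalClosure := by
    rw [hsingle]
    exact K.le_topologicalClosure (K.smul_mem _ (Submodule.subset_span (Or.inl rfl)))
  have htail : f - lp.single p (0, true) (f (0, true)) ∈ K.topologicalClosure := by
    rw [← (lp.hasSum_single_false_add_single_succ_true hp f).tsum_eq]
    refine tsum_mem K.isClosed_topologicalClosure fun d => K.le_topologicalClosure ?_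
    have hpair : lp.single (E := fun _ : ℕ × Bool => 𝕜) p (d, false) (f (d, false)) +
        lp.single p (d + 1, true) (f (d + 1, true)) =
          (f (d, false) * c⁻¹) • c • (lp.single p (d, false) 1 + lp.single p (d + 1, true) 1) := by
      rw [smul_smul, inv_mul_cancel_right₀ hc, smul_add, hf, ← hsingle, ← hsingle]
    rw [hpair]
    exact K.smul_mem _ (Submodule.subset_span (Or.inr ⟨d, rfl⟩))
  rw [← K.topologicalClosure_coe, SetLike.mem_coe, ← sub_add_cancel f (lp.single p _ _)]
  exact add_mem htail hhead

end ClosedSpan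

theorem hasSum_pow_mul_of_fintype {ι : Type*} [Fintype ι] {r : ℝ} (hr0 : 0 ≤ r) (hr1 : r < 1)
    (w : ι → ℝ) :
    HasSum (fun x : ℕ × ι => r ^ x.1 * w x.2) ((1 - r)⁻¹ * ∑ i, w i) :=
  (hasSum_geometric_of_lt_one hr0 hr1).mul (hasSum_fintype w) <|
    summable_mul_of_summable_norm
      (by simpa [abs_of_nonneg hr0] using summable_geometric_of_lt_one hr0 hr1) .of_finite

theorem hasSum_norm_sq_sqrt_one_sub_sq_mul_pow {ι : Type*} [Fintype ι] {γ : ℝ} (hγ : γ ^ 2 < 1)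
    {w : ι → ℝ} (hw : ∑ i, w i ^ 2 = 1) :
    HasSum (fun x : ℕ × ι => ‖((Real.sqrt (1 - γ ^ 2) * γ ^ x.1 * w x.2 : ℝ) : ℂ)‖ ^ 2) 1 := by
  have hterm : (fun x : ℕ × ι => ‖((Real.sqrt (1 - γ ^ 2) * γ ^ x.1 * w x.2 : ℝ) : ℂ)‖ ^ 2) =
      fun x => (1 - γ ^ 2) * ((γ ^ 2) ^ x.1 * w x.2 ^ 2) := by
    funext x
    rw [Complex.norm_real, Real.norm_eq_abs, sq_abs, mul_pow, mul_pow,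
      Real.sq_sqrt (sub_pos.2 hγ).le]
    ring
  have htotal : (1 - γ ^ 2) * ((1 - γ ^ 2)⁻¹ * ∑ i, w i ^ 2) = 1 := by
    rw [hw, mul_one, mul_inv_cancel₀ (sub_pos.2 hγ).ne']
  have hsum := (hasSum_pow_mul_of_fintype (sq_nonneg γ) hγ (w · ^ 2)).mul_left (1 - γ ^ 2)
  rwa [htotal, ← hterm] at hsum

theorem lp.exists_eq_of_hasSum_norm_sq {α E : Type*} [NormedAddCommGroup E] {f : α → E} {s : ℝ}
    (hf : HasSum (fun x => ‖f x‖ ^ 2) s) :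
    ∃ Ψ : lp (fun _ : α => E) 2, ⇑Ψ = f ∧ ‖Ψ‖ = Real.sqrt s := by
  have h2 : (2 : ℝ≥0∞).toReal = (2 : ℕ) := by norm_num
  have hmem : Memℓp f 2 :=
    (memℓp_gen_iff (by norm_num)).2 (by simpa only [h2, Real.rpow_natCast] using hf.summable)
  refine ⟨⟨f, hmem⟩, rfl, ?_⟩
  have hnorm := lp.hasSum_norm (by norm_num) (⟨f, hmem⟩ : lp (fun _ : α => E) 2)
  simp only [h2, Real.rpow_natCast] at hnorm
  rw [← hnorm.unique hf, Real.sqrt_sq (norm_nonneg _)]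

theorem one_sub_sq_div_sq_add_sq {p : ℝ} (hp : p ≠ 0) :
    1 - p ^ 2 / (p ^ 2 + (1 - p) ^ 2) = ((1 - p) / p) ^ 2 * (p ^ 2 / (p ^ 2 + (1 - p) ^ 2)) := by
  have : p ^ 2 + (1 - p) ^ 2 ≠ 0 := by positivity
  field_simp
  ring

theorem stmt_4 (p γ q : ℝ) (hp : 1/2 < p) (hp1 : p < 1)
    (hγ : γ = (1 - p) / p) (hq : q = p ^ 2 / (p ^ 2 + (1 - p) ^ 2)) :
    ∃ Ψ : lp (fun _ : ℕ × Bool => ℂ) 2,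
      (∀ d : ℕ, Ψ (d, false) =
        ((Real.sqrt (1 - γ ^ 2) * γ ^ d * Real.sqrt (1 - q) : ℝ) : ℂ)) ∧
      (∀ d : ℕ, Ψ (d, true) =
        ((Real.sqrt (1 - γ ^ 2) * γ ^ d * Real.sqrt q : ℝ) : ℂ)) ∧
      ‖Ψ‖ = 1 ∧
      Ψ ∈ closure (↑(Submodule.span ℂ
        (({lp.single 2 ((0 : ℕ), true) (1 : ℂ)} ∪
          {v | ∃ d : ℕ, v = ((Real.sqrt 2)⁻¹ : ℂ) •
            (lp.single 2 (d, false) (1 : ℂ) + lp.single 2 (d + 1, true) (1 : ℂ))}) :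
          Set (lp (fun _ : ℕ × Bool => ℂ) 2))) : Set (lp (fun _ : ℕ × Bool => ℂ) 2)) := by
  have hp0 : 0 < p := by linarith
  have hγ0 : 0 ≤ γ := hγ ▸ div_nonneg (by linarith) hp0.le
  have hγ1 : γ < 1 := by rw [hγ, div_lt_one hp0]; linarith
  have hγ2 : γ ^ 2 < 1 := by nlinarith
  have hq0 : 0 ≤ q := hq ▸ by positivity
  have hq_compl : 1 - q = γ ^ 2 * q := by rw [hγ, hq]; exact one_sub_sq_div_sq_add_sq hp0.ne'
  have hq1 : 0 ≤ 1 - q := by rw [hq_compl]; positivity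
  have hsqrt : Real.sqrt (1 - q) = γ * Real.sqrt q := by
    rw [hq_compl, Real.sqrt_mul (sq_nonneg γ), Real.sqrt_sq hγ0]
  set s : Bool → ℝ := fun b => bif b then Real.sqrt q else Real.sqrt (1 - q)
  have hs : ∑ b, s b ^ 2 = 1 := by
    simp only [Fintype.sum_bool, s, cond_true, cond_false]
    rw [Real.sq_sqrt hq0, Real.sq_sqrt hq1, add_sub_cancel]
  obtain ⟨Ψ, hΨ, hnorm⟩ :=
    lp.exists_eq_of_hasSum_norm_sq (hasSum_norm_sq_sqrt_one_sub_sq_mul_pow hγ2 hs)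
  refine ⟨Ψ, fun d => by simp [hΨ, s], fun d => by simp [hΨ, s], by rw [hnorm, Real.sqrt_one], ?_⟩
  refine lp.mem_closure_span_of_apply_succ_true (by simp) (by simp) Ψ fun d => ?_
  simp only [hΨ, s, cond_true, cond_false, hsqrt, pow_succ]
  push_cast
  ring
end

section
/- Let I be a type and work in the Hilbert space H = ℓ²(ℕ × Bool × I). Let K be the topological closure of the linear span of the set consisting of the vectors δ_{(0,true,i)} for i ∈ I together with the vectors (δ_{(d,false,i)} + δ_{(d+1,true,i)})/√2 for d ∈ ℕ and i ∈ I, and let P_K denote the orthogonal projection of H onto K. For any unit vector w ∈ ℓ²(ℕ × I), define W ∈ H by W(d, false, i) = w(d, i) and W(d, true, i) = 0 for all d ∈ ℕ, i ∈ I. Then ‖P_K W‖² = 1/2. -/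
/-!
The generators of `K` form an orthonormal family, so they are a Hilbert basis of `K`, and
Parseval's identity in `K` gives `‖P_K W‖² = ∑ₖ ‖⟪vₖ, W⟫‖²`. As `W` vanishes on the `true` half
of the qubit, it is orthogonal to every `δ_(0,true,i)`, while its inner product with
`(δ_(d,false,i) + δ_(d+1,true,i))/√2` is `w(d,i)/√2`; the sum is therefore `‖w‖²/2`.
-/

open Submodule

theorem Orthonormal.hasSum_norm_sq_orthogonalProjectionOnto {𝕜 E ι : Type*} [RCLike 𝕜]
    [NormedAddCommGroup E] [InnerProductSpace 𝕜 E] {v : ι → E} (hv : Orthonormal 𝕜 v)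
    {K : Submodule 𝕜 E} [CompleteSpace K] (hK : K = (span 𝕜 (Set.range v)).topologicalClosure)
    (x : E) :
    HasSum (fun i => ‖inner 𝕜 (v i) x‖ ^ 2) (‖(K.orthogonalProjectionOnto x : E)‖ ^ 2) := by
  have hvK : ∀ i, v i ∈ K := fun i => hK ▸ le_topologicalClosure _ (subset_span ⟨i, rfl⟩)
  let v' : ι → K := fun i => ⟨v i, hvK i⟩
  have hdense : (span 𝕜 (Set.range v'))ᗮ = ⊥ := by
    refine eq_bot_iff.2 fun y hy => ?_
    have hspan : span 𝕜 (Set.range v) ≤ LinearMap.ker (innerₛₗ 𝕜 (y : E)) :=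
      span_le.2 <| Set.range_subset_iff.2 fun i =>
        inner_eq_zero_symm.1 ((mem_orthogonal _ _).1 hy (v' i) (subset_span ⟨i, rfl⟩))
    have hyK : (y : E) ∈ Kᗮ := by
      have : (y : E) ∈ (span 𝕜 (Set.range v))ᗮ := (mem_orthogonal' _ _).2 fun u hu => hspan hu
      rwa [← orthogonal_closure, ← hK] at this
    exact (mem_bot 𝕜).2 (Subtype.ext ((mem_bot 𝕜).1 (K.inf_orthogonal_eq_bot.le ⟨y.2, hyK⟩)))
  let b := HilbertBasis.mkOfOrthogonalEqBot (hv.codRestrict K hvK) hdense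
  have hb : ⇑b = v' := HilbertBasis.coe_mkOfOrthogonalEqBot _ _
  have parseval := b.hasSum_inner_mul_inner (K.orthogonalProjectionOnto x)
    (K.orthogonalProjectionOnto x)
  simp only [hb, inner_orthogonalProjectionOnto_eq_of_mem_left,
    inner_orthogonalProjectionOnto_eq_of_mem_right, ← inner_conj_symm x, RCLike.conj_mul,
    inner_self_eq_norm_sq_to_K] at parseval
  exact_mod_cast parseval

local notation "𝓗[" I "]" => lp (fun _ : ℕ × Bool × I => ℂ) 2

section
variable (I : Type*) [DecidableEq I]

noncomputable def acceptingVec : I ⊕ (ℕ × I) → 𝓗[I]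
  | .inl i => lp.single 2 (0, true, i) 1
  | .inr (d, i) => ((√2)⁻¹ : ℂ) • (lp.single 2 (d, false, i) 1 + lp.single 2 (d + 1, true, i) 1)

variable {I}

@[simp]
theorem acceptingVec_inl_apply (i : I) (x : ℕ × Bool × I) :
    acceptingVec I (.inl i) x = if x = (0, true, i) then 1 else 0 := by
  simp [acceptingVec, Pi.single_apply]

@[simp]
theorem acceptingVec_inr_apply (d : ℕ) (i : I) (x : ℕ × Bool × I) :
    acceptingVec I (.inr (d, i)) x =
      (√2 : ℂ)⁻¹ *
        ((if x = (d, false, i) then 1 else 0) + if x = (d + 1, true, i) then 1 else 0) := by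
  simp only [acceptingVec, lp.coeFn_smul, lp.coeFn_add, Pi.smul_apply, Pi.add_apply,
    lp.coeFn_single, Pi.single_apply, smul_eq_mul]

theorem inner_acceptingVec_inl (i : I) (u : 𝓗[I]) :
    inner ℂ (acceptingVec I (.inl i)) u = u (0, true, i) := by
  simp [acceptingVec, lp.inner_single_left]

theorem inner_acceptingVec_inr (d : ℕ) (i : I) (u : 𝓗[I]) :
    inner ℂ (acceptingVec I (.inr (d, i))) u =
      (√2 : ℂ)⁻¹ * (u (d, false, i) + u (d + 1, true, i)) := by
  simp only [acceptingVec, inner_smul_left, inner_add_left, lp.inner_single_left]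
  simp

theorem inv_sqrt_two_mul_inv_sqrt_two : (√2 : ℂ)⁻¹ * (√2 : ℂ)⁻¹ = 2⁻¹ := by
  rw [← mul_inv, ← Complex.ofReal_mul, Real.mul_self_sqrt zero_le_two, Complex.ofReal_ofNat]

theorem orthonormal_acceptingVec : Orthonormal ℂ (acceptingVec I) := by
  rw [orthonormal_iff_ite]
  rintro (i | ⟨d, i⟩) (j | ⟨e, j⟩)
  · rw [inner_acceptingVec_inl]; simp
  · rw [inner_acceptingVec_inl]; simp
  · rw [inner_acceptingVec_inr]; simp
  · rw [inner_acceptingVec_inr]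
    by_cases h : d = e ∧ i = j
    · obtain ⟨rfl, rfl⟩ := h
      simp [← two_mul, mul_left_comm _ (2 : ℂ), inv_sqrt_two_mul_inv_sqrt_two]
    · simp [h]

theorem range_acceptingVec : Set.range (acceptingVec I) =
    {v | ∃ i : I, v = lp.single 2 ((0 : ℕ), true, i) (1 : ℂ)} ∪
      {v | ∃ (d : ℕ) (i : I), v = ((√2)⁻¹ : ℂ) •
        (lp.single 2 (d, false, i) (1 : ℂ) + lp.single 2 (d + 1, true, i) (1 : ℂ))} := by
  ext v
  simp [acceptingVec, eq_comm]

theorem hasSum_norm_sq_inner_acceptingVec (w : lp (fun _ : ℕ × I => ℂ) 2) (W : 𝓗[I])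
    (hWf : ∀ d i, W (d, false, i) = w (d, i)) (hWt : ∀ d i, W (d, true, i) = 0) :
    HasSum (fun k => ‖inner ℂ (acceptingVec I k) W‖ ^ 2) (‖w‖ ^ 2 / 2) := by
  have hnorm := (lp.hasSum_norm (p := 2) (by norm_num) w).div_const 2
  simp only [ENNReal.toReal_ofNat, Real.rpow_two] at hnorm
  have h_inl : ∀ i, ‖inner ℂ (acceptingVec I (.inl i)) W‖ ^ 2 = 0 := by
    simp [inner_acceptingVec_inl, hWt]
  have h_inr : ∀ p : ℕ × I, ‖inner ℂ (acceptingVec I (.inr p)) W‖ ^ 2 = ‖w p‖ ^ 2 / 2 := by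
    rintro ⟨d, i⟩
    rw [inner_acceptingVec_inr, hWf, hWt, add_zero, norm_mul, mul_pow, norm_inv, inv_pow,
      Complex.norm_real, Real.norm_of_nonneg (Real.sqrt_nonneg 2), Real.sq_sqrt zero_le_two,
      inv_mul_eq_div]
  rw [← zero_add (‖w‖ ^ 2 / 2)]
  refine HasSum.sum ?_ ?_
  · simp only [Function.comp_def, h_inl]
    exact hasSum_zero
  · simp only [Function.comp_def, h_inr]
    exact hnorm

end

theorem stmt_5 {I : Type*} [DecidableEq I]
    (K : Submodule ℂ (lp (fun _ : ℕ × Bool × I => ℂ) 2)) [CompleteSpace K]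
    (hK : K = (Submodule.span ℂ
      (({v | ∃ i : I, v = lp.single 2 ((0 : ℕ), true, i) (1 : ℂ)} ∪
        {v | ∃ (d : ℕ) (i : I), v = ((Real.sqrt 2)⁻¹ : ℂ) •
          (lp.single 2 (d, false, i) (1 : ℂ) +
            lp.single 2 (d + 1, true, i) (1 : ℂ))}) :
        Set (lp (fun _ : ℕ × Bool × I => ℂ) 2))).topologicalClosure)
    (w : lp (fun _ : ℕ × I => ℂ) 2) (hw : ‖w‖ = 1)
    (W : lp (fun _ : ℕ × Bool × I => ℂ) 2)
    (hWf : ∀ (d : ℕ) (i : I), W (d, false, i) = w (d, i))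
    (hWt : ∀ (d : ℕ) (i : I), W (d, true, i) = 0) :
    ‖(K.orthogonalProjectionOnto W : lp (fun _ : ℕ × Bool × I => ℂ) 2)‖ ^ 2 = 1 / 2 := by
  rw [← range_acceptingVec] at hK
  have h := orthonormal_acceptingVec.hasSum_norm_sq_orthogonalProjectionOnto hK W
  rw [h.unique (hasSum_norm_sq_inner_acceptingVec w W hWf hWt), hw]
  norm_num
end

section
/- Let p be a real number with 0 ≤ p < 1/4 and let ψ ∈ ℓ²(ℕ) be a unit vector. Then ∑_{d=0}^{∞} |(1−2p)·ψ_d + 2p·ψ_{d+1}|² ≥ (1 − 2p − 2p·√(1 − |ψ_0|²))², and moreover (1 − 2p − 2p·√(1 − |ψ_0|²))² ≥ (1−4p)². -/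
set_option maxHeartbeats 1000000

theorem stmt_6 (p : ℝ) (hp0 : 0 ≤ p) (hp : p < 1/4)
    (ψ : lp (fun _ : ℕ => ℂ) 2) (hψ : ‖ψ‖ = 1) :
    (1 - 2*p - 2*p*Real.sqrt (1 - ‖ψ 0‖ ^ 2)) ^ 2 ≤
      (∑' d : ℕ, ‖((1 - 2*p : ℝ) : ℂ) * ψ d + ((2*p : ℝ) : ℂ) * ψ (d+1)‖ ^ 2) ∧
    (1 - 4*p) ^ 2 ≤ (1 - 2*p - 2*p*Real.sqrt (1 - ‖ψ 0‖ ^ 2)) ^ 2 := by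
  have hpt : (0:ℝ) < (2 : ENNReal).toReal := by norm_num
  have htR : ((2 : ENNReal)).toReal = (2:ℝ) := by norm_num
  -- summability of ‖ψ d‖^2
  have hsum : Summable (fun d : ℕ => ‖ψ d‖ ^ (2:ℝ)) := by
    have h := lp.memℓp ψ
    rw [memℓp_gen_iff hpt] at h
    simpa [htR] using h
  have hsum' : Summable (fun d : ℕ => ‖ψ d‖ ^ (2:ℕ)) := by
    convert hsum using 2 with d
    rw [← Real.rpow_natCast]; norm_num
  -- the shifted sequence
  have hshift : Memℓp (fun d : ℕ => ψ (d+1)) (2 : ENNReal) := by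
    apply memℓp_gen
    simpa [htR] using (summable_nat_add_iff 1).2 hsum
  set Sψ : lp (fun _ : ℕ => ℂ) 2 := ⟨fun d => ψ (d+1), hshift⟩ with hSdef
  have hS : ∀ d, Sψ d = ψ (d+1) := fun d => rfl
  -- tsum ‖ψ‖² = 1
  have hconv : ∀ x : ℝ, 0 ≤ x → x ^ (2:ℝ) = x ^ (2:ℕ) := by
    intro x hx; rw [← Real.rpow_natCast]; norm_num
  have hψ2 : (∑' d : ℕ, ‖ψ d‖ ^ (2:ℕ)) = 1 := by
    have h1 := lp.norm_rpow_eq_tsum hpt ψ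
    rw [hψ] at h1
    simp only [htR] at h1
    rw [Real.one_rpow] at h1
    rw [← tsum_congr (fun d => hconv _ (norm_nonneg _))]
    exact h1.symm
  have hψ0le : ‖ψ 0‖ ^ 2 ≤ 1 := by
    rw [← hψ2]
    exact Summable.le_tsum hsum' 0 (fun i _ => by positivity)
  -- norm of shift
  have hSnorm2 : ‖Sψ‖ ^ (2:ℕ) = 1 - ‖ψ 0‖ ^ 2 := by
    have h1 : ‖Sψ‖ ^ ((2:ENNReal)).toReal = ∑' d : ℕ, ‖Sψ d‖ ^ ((2:ENNReal)).toReal :=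
      lp.norm_rpow_eq_tsum hpt Sψ
    simp only [htR, hS] at h1
    have h2 : (∑' d : ℕ, ‖ψ d‖ ^ (2:ℕ)) = ‖ψ 0‖ ^ 2 + ∑' d : ℕ, ‖ψ (d+1)‖ ^ (2:ℕ) :=
      Summable.tsum_eq_zero_add hsum'
    rw [hψ2] at h2
    have h3 : (∑' d : ℕ, ‖ψ (d+1)‖ ^ (2:ℕ)) = 1 - ‖ψ 0‖ ^ 2 := by linarith
    calc ‖Sψ‖ ^ (2:ℕ) = ‖Sψ‖ ^ (2:ℝ) := by rw [← Real.rpow_natCast]; norm_num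
    _ = ∑' d : ℕ, ‖ψ (d+1)‖ ^ (2:ℝ) := h1
    _ = ∑' d : ℕ, ‖ψ (d+1)‖ ^ (2:ℕ) := by
          congr 1; funext d; rw [← Real.rpow_natCast]; norm_num
    _ = 1 - ‖ψ 0‖ ^ 2 := h3
  have hSnorm : ‖Sψ‖ = Real.sqrt (1 - ‖ψ 0‖ ^ 2) := by
    rw [← hSnorm2]
    exact (Real.sqrt_sq (norm_nonneg _)).symm
  have hsqrt_le : Real.sqrt (1 - ‖ψ 0‖ ^ 2) ≤ 1 := by
    have h := Real.sqrt_le_sqrt (show 1 - ‖ψ 0‖ ^ 2 ≤ 1 by nlinarith [sq_nonneg (‖ψ 0‖)])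
    simpa using h
  have hsqrt_nonneg : 0 ≤ Real.sqrt (1 - ‖ψ 0‖ ^ 2) := Real.sqrt_nonneg _
  set R : ℝ := 1 - 2*p - 2*p*Real.sqrt (1 - ‖ψ 0‖ ^ 2) with hRdef
  have hR14 : 1 - 4*p ≤ R := by nlinarith
  have h14 : (0:ℝ) ≤ 1 - 4*p := by linarith
  have hR0 : 0 ≤ R := le_trans h14 hR14
  constructor
  · -- main inequality
    set φ : lp (fun _ : ℕ => ℂ) 2 :=
      ((1 - 2*p : ℝ) : ℂ) • ψ + ((2*p : ℝ) : ℂ) • Sψ with hφdef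
    have hφap : ∀ d, φ d = ((1 - 2*p : ℝ) : ℂ) * ψ d + ((2*p : ℝ) : ℂ) * ψ (d+1) := by
      intro d
      simp only [hφdef, lp.coeFn_add, lp.coeFn_smul, Pi.add_apply, Pi.smul_apply,
        smul_eq_mul, hS]
    have htsum : (∑' d : ℕ, ‖((1 - 2*p : ℝ) : ℂ) * ψ d + ((2*p : ℝ) : ℂ) * ψ (d+1)‖ ^ 2)
        = ‖φ‖ ^ (2:ℕ) := by
      have h1 := lp.norm_rpow_eq_tsum hpt φ
      simp only [htR] at h1
      rw [show ‖φ‖ ^ (2:ℕ) = ‖φ‖ ^ (2:ℝ) by rw [← Real.rpow_natCast]; norm_num, h1]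
      congr 1; funext d
      rw [hφap d, ← Real.rpow_natCast]; norm_num
    rw [htsum]
    have hle : R ≤ ‖φ‖ := by
      have h1 : ‖((1 - 2*p : ℝ) : ℂ) • ψ‖ - ‖((2*p : ℝ) : ℂ) • Sψ‖ ≤ ‖φ‖ := by
        have := norm_sub_norm_le (((1 - 2*p : ℝ) : ℂ) • ψ) (-(((2*p : ℝ) : ℂ) • Sψ))
        simpa [hφdef, sub_neg_eq_add] using this
      have h2 : ‖((1 - 2*p : ℝ) : ℂ) • ψ‖ = 1 - 2*p := by
        rw [norm_smul, hψ, mul_one, Complex.norm_real, Real.norm_eq_abs,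
          abs_of_nonneg (by linarith : (0:ℝ) ≤ 1 - 2*p)]
      have h3 : ‖((2*p : ℝ) : ℂ) • Sψ‖ = 2*p*Real.sqrt (1 - ‖ψ 0‖ ^ 2) := by
        rw [norm_smul, hSnorm, Complex.norm_real, Real.norm_eq_abs,
          abs_of_nonneg (by linarith : (0:ℝ) ≤ 2*p)]
      rw [h2, h3] at h1
      exact h1
    exact pow_le_pow_left₀ hR0 hle 2
  · exact pow_le_pow_left₀ h14 hR14 2
end

section
/- Let p be a real number with 1/4 < p ≤ 1 and set γ = 1 − 1/(2p). Then |γ| < 1; the sequence ψ defined by ψ_d = √(1−γ²)·γ^d is a unit vector of ℓ²(ℕ); and (1−2p)·ψ_d + 2p·ψ_{d+1} = 0 for every d ∈ ℕ. -/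
theorem stmt_7 (p γ : ℝ) (hp : 1/4 < p) (hp1 : p ≤ 1) (hγ : γ = 1 - 1/(2*p)) :
    |γ| < 1 ∧
    ∃ ψ : lp (fun _ : ℕ => ℂ) 2,
      (∀ d : ℕ, ψ d = ((Real.sqrt (1 - γ ^ 2) * γ ^ d : ℝ) : ℂ)) ∧
      ‖ψ‖ = 1 ∧
      ∀ d : ℕ, ((1 - 2*p : ℝ) : ℂ) * ψ d + ((2*p : ℝ) : ℂ) * ψ (d+1) = 0 := by
  have hp0 : 0 < p := lt_trans (by norm_num) hp
  have hγlt : γ < 1 := by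
    rw [hγ]; have : 0 < 1/(2*p) := by positivity
    linarith
  have hγgt : -1 < γ := by
    rw [hγ]
    have h2 : 1/(2*p) < 2 := by
      rw [div_lt_iff₀ (by linarith)]; linarith
    linarith
  have habs : |γ| < 1 := abs_lt.2 ⟨hγgt, hγlt⟩
  have hγ2 : γ ^ 2 < 1 := by nlinarith
  have hγ2pos : 0 < 1 - γ ^ 2 := by linarith
  set f : ∀ _ : ℕ, ℂ := fun d => ((Real.sqrt (1 - γ ^ 2) * γ ^ d : ℝ) : ℂ) with hf
  have hnorm : ∀ d : ℕ, ‖f d‖ ^ (2:ℝ) = (1 - γ ^ 2) * (γ ^ 2) ^ d := by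
    intro d
    rw [hf]
    simp only [Complex.norm_real]
    rw [show ((2:ℝ)) = ((2:ℕ):ℝ) by norm_num, Real.rpow_natCast]
    rw [Real.norm_eq_abs, sq_abs, mul_pow, Real.sq_sqrt (le_of_lt hγ2pos), ← pow_mul,
      mul_comm d 2, pow_mul]
  have hsum : Summable fun d : ℕ => ‖f d‖ ^ (2:ℝ) := by
    simp only [hnorm]
    exact (summable_geometric_of_lt_one (by positivity) hγ2).mul_left _
  have htsum : (∑' d : ℕ, ‖f d‖ ^ (2:ℝ)) = 1 := by
    simp only [hnorm]
    rw [tsum_mul_left, tsum_geometric_of_lt_one (by positivity) hγ2]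
    field_simp
  have hmem : Memℓp f 2 := memℓp_gen (by simpa using hsum)
  refine ⟨habs, ⟨⟨f, hmem⟩, fun d => rfl, ?_, ?_⟩⟩
  · rw [lp.norm_eq_tsum_rpow (by norm_num) ⟨f, hmem⟩]
    have : (2 : ENNReal).toReal = (2:ℝ) := by norm_num
    rw [this]
    rw [show (∑' d : ℕ, ‖(⟨f, hmem⟩ : lp (fun _ : ℕ => ℂ) 2) d‖ ^ (2:ℝ)) = 1 from htsum]
    norm_num
  · intro d
    show ((1 - 2*p : ℝ) : ℂ) * f d + ((2*p : ℝ) : ℂ) * f (d+1) = 0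
    rw [hf]
    have key : (1-2*p)*(Real.sqrt (1-γ^2)*γ^d) + (2*p)*(Real.sqrt (1-γ^2)*γ^(d+1)) = 0 := by
      have hγp : (2*p) * γ = 2*p - 1 := by rw [hγ]; field_simp
      have : γ^(d+1) = γ^d * γ := pow_succ γ d
      rw [this]; linear_combination (Real.sqrt (1-γ^2)*γ^d) * hγp
    have := congrArg (Complex.ofReal) key
    push_cast at this ⊢
    linear_combination this
end

section
/- Let ℓ and L be natural numbers with 0 < ℓ < L, and let w ∈ ℓ²(ℕ) be a unit vector. Then there exist a unit vector w̃ ∈ ℓ²(ℕ) and a function k : ℕ → ℕ such that for every j ∈ ℕ one has j·L ≤ k(j) and k(j) + ℓ ≤ (j+1)·L; w̃_d = 0 whenever k(j) ≤ d < k(j) + ℓ for some j ∈ ℕ; and √(1 − |⟨w̃, w⟩|²) ≤ √(ℓ/(L−ℓ)). -/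
/-!
Each block `[jL, (j+1)L)` contains `⌊L/ℓ⌋` disjoint windows of length `ℓ`, so one of them carries
at most a `1/⌊L/ℓ⌋ ≤ ℓ/(L-ℓ)` fraction of the block's mass `∑ |w_d|²`. Cutting these windows out
of `w` removes a total mass `R ≤ ℓ/(L-ℓ)`. The truncation `v` is orthogonal to the removed part,
so `⟪v, w⟫ = ‖v‖² = 1 - R`, and `w̃ = v/‖v‖` satisfies `1 - |⟪w̃, w⟫|² = R`. (If `v = 0`, then
`R = 1` and any unit vector vanishing on the windows will do.)
-/

open scoped InnerProductSpace
open Finset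

theorem Finset.sum_range_sum_Ico_mul {M : Type*} [AddCommMonoid M] (g : ℕ → M) (ℓ m : ℕ) :
    ∑ i ∈ range m, ∑ t ∈ Ico (i * ℓ) (i * ℓ + ℓ), g t = ∑ t ∈ range (m * ℓ), g t := by
  induction m with
  | zero => simp
  | succ m ih =>
    rw [sum_range_succ, ih, Nat.succ_mul, sum_range_add_sum_Ico _ (Nat.le_add_right _ _)]

theorem HasSum.sum_range_mul_add {α : Type*} [AddCommMonoid α] [TopologicalSpace α]
    [ContinuousAdd α] [RegularSpace α] {f : ℕ → α} {a : α} (hf : HasSum f a) {L : ℕ}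
    (hL : 0 < L) : HasSum (fun j => ∑ t ∈ range L, f (j * L + t)) a := by
  have : NeZero L := ⟨hL.ne'⟩
  have hprod : HasSum (fun p : ℕ × Fin L => f (p.1 * L + p.2)) a := by
    refine (Nat.divModEquiv L).hasSum_iff.1 ?_
    simpa [Function.comp_def, Nat.divModEquiv, Nat.div_add_mod'] using hf
  refine hprod.prod_fiberwise fun j => ?_
  rw [← Fin.sum_univ_eq_sum_range (fun t => f (j * L + t))]
  exact hasSum_fintype _

theorem exists_mul_sum_Ico_le {g : ℕ → ℝ} (hg : ∀ t, 0 ≤ g t) {ℓ L : ℕ} (hℓ : 0 < ℓ)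
    (hL : ℓ ≤ L) :
    ∃ i, i * ℓ + ℓ ≤ L ∧
      ((L / ℓ : ℕ) : ℝ) * ∑ t ∈ Ico (i * ℓ) (i * ℓ + ℓ), g t ≤ ∑ t ∈ range L, g t := by
  set W := fun i => ∑ t ∈ Ico (i * ℓ) (i * ℓ + ℓ), g t
  obtain ⟨i, hi, hmin⟩ := (range (L / ℓ)).exists_min_image W
    ⟨0, mem_range.2 (Nat.div_pos hL hℓ)⟩
  refine ⟨i, ?_, ?_⟩
  · calc i * ℓ + ℓ = (i + 1) * ℓ := by ring
      _ ≤ L / ℓ * ℓ := Nat.mul_le_mul_right ℓ (mem_range.1 hi)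
      _ ≤ L := Nat.div_mul_le_self L ℓ
  · calc ((L / ℓ : ℕ) : ℝ) * W i = #(range (L / ℓ)) • W i := by simp
      _ ≤ ∑ i ∈ range (L / ℓ), W i := card_nsmul_le_sum _ _ _ hmin
      _ = ∑ t ∈ range (L / ℓ * ℓ), g t := sum_range_sum_Ico_mul g ℓ _
      _ ≤ ∑ t ∈ range L, g t :=
        sum_le_sum_of_subset_of_nonneg (range_subset_range.2 (Nat.div_mul_le_self L ℓ))
          fun t _ _ => hg t

def windowUnion (ℓ : ℕ) (k : ℕ → ℕ) : Set ℕ := ⋃ j, Set.Ico (k j) (k j + ℓ)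

theorem mem_windowUnion {ℓ : ℕ} {k : ℕ → ℕ} {d : ℕ} :
    d ∈ windowUnion ℓ k ↔ ∃ j, k j ≤ d ∧ d < k j + ℓ := by
  simp [windowUnion]

theorem mem_windowUnion_block_iff {ℓ L : ℕ} {k : ℕ → ℕ}
    (hk : ∀ j, j * L ≤ k j ∧ k j + ℓ ≤ (j + 1) * L) {j t : ℕ} (ht : t < L) :
    j * L + t ∈ windowUnion ℓ k ↔ k j ≤ j * L + t ∧ j * L + t < k j + ℓ := by
  refine ⟨fun h => ?_, fun h => mem_windowUnion.2 ⟨j, h⟩⟩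
  obtain ⟨j', h₁, h₂⟩ := mem_windowUnion.1 h
  have hlt : j' * L < (j + 1) * L := by linarith [(hk j').1]
  have hgt : j * L < (j' + 1) * L := by linarith [(hk j').2]
  obtain rfl : j' = j := by
    have := Nat.lt_of_mul_lt_mul_right hlt
    have := Nat.lt_of_mul_lt_mul_right hgt
    omega
  exact ⟨h₁, h₂⟩

theorem exists_notMem_windowUnion {ℓ L : ℕ} {k : ℕ → ℕ}
    (hk : ∀ j, j * L ≤ k j ∧ k j + ℓ ≤ (j + 1) * L) (hL : ℓ < L) : ∃ d, d ∉ windowUnion ℓ k := by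
  by_contra! h
  have h₀ := (mem_windowUnion_block_iff hk (j := 0) (Nat.zero_lt_of_lt hL)).1 (h _)
  have hℓ := (mem_windowUnion_block_iff hk (j := 0) hL).1 (h _)
  simp only [zero_mul, zero_add] at h₀ hℓ
  omega

theorem exists_tsum_indicator_windowUnion_le {f : ℕ → ℝ} (hf₀ : ∀ d, 0 ≤ f d) (hf : Summable f)
    {ℓ L : ℕ} (hℓ : 0 < ℓ) (hL : ℓ ≤ L) :
    ∃ k : ℕ → ℕ, (∀ j, j * L ≤ k j ∧ k j + ℓ ≤ (j + 1) * L) ∧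
      ((L : ℝ) - ℓ) * ∑' d, (windowUnion ℓ k).indicator f d ≤ ℓ * ∑' d, f d := by
  classical
  choose i hiL hi using fun j => exists_mul_sum_Ico_le (g := fun t => f (j * L + t))
    (fun t => hf₀ _) hℓ hL
  set k := fun j => j * L + i j * ℓ
  have hk : ∀ j, j * L ≤ k j ∧ k j + ℓ ≤ (j + 1) * L := fun j =>
    ⟨Nat.le_add_right _ _, by simp only [k]; linarith [hiL j]⟩
  set S := windowUnion ℓ k
  have hblock : ∀ j, ∑ t ∈ range L, S.indicator f (j * L + t) =
      ∑ t ∈ Ico (i j * ℓ) (i j * ℓ + ℓ), f (j * L + t) := by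
    intro j
    have hsub : Ico (i j * ℓ) (i j * ℓ + ℓ) ⊆ range L := fun t ht => by
      simp only [mem_Ico, mem_range] at ht ⊢
      linarith [hiL j]
    rw [← sum_indicator_subset (fun t => f (j * L + t)) hsub]
    refine sum_congr rfl fun t ht => ?_
    rw [Set.indicator_apply, Set.indicator_apply, mem_windowUnion_block_iff hk (mem_range.1 ht)]
    simp only [coe_Ico, Set.mem_Ico, k, add_assoc, add_le_add_iff_left, add_lt_add_iff_left]
  have hm : (L : ℝ) - ℓ ≤ ((L / ℓ : ℕ) : ℝ) * ℓ := by
    have : (L : ℝ) < ((L / ℓ : ℕ) : ℝ) * ℓ + ℓ := by exact_mod_cast Nat.lt_div_mul_add hℓ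
    linarith
  set m : ℝ := ((L / ℓ : ℕ) : ℝ)
  have hmass : m * ∑' d, S.indicator f d ≤ ∑' d, f d :=
    hasSum_le (fun j => (hblock j).symm ▸ hi j)
      (((hf.indicator S).hasSum.sum_range_mul_add (hℓ.trans_le hL)).mul_left m)
      (hf.hasSum.sum_range_mul_add (hℓ.trans_le hL))
  have hR : 0 ≤ ∑' d, S.indicator f d := tsum_nonneg (Set.indicator_nonneg fun d _ => hf₀ d)
  refine ⟨k, hk, ?_⟩
  calc ((L : ℝ) - ℓ) * ∑' d, S.indicator f d ≤ m * ℓ * ∑' d, S.indicator f d := by gcongr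
    _ = ℓ * (m * ∑' d, S.indicator f d) := by ring
    _ ≤ ℓ * ∑' d, f d := by gcongr

theorem exists_mem_norm_eq_one_one_sub_norm_inner_sq_le {𝕜 E : Type*} [RCLike 𝕜]
    [NormedAddCommGroup E] [InnerProductSpace 𝕜 E] {K : Submodule 𝕜 E} (hK : K ≠ ⊥) {v w : E}
    (hv : v ∈ K) (hw : ‖w‖ = 1) (horth : ⟪v, w - v⟫_𝕜 = 0) :
    ∃ u ∈ K, ‖u‖ = 1 ∧ 1 - ‖⟪u, w⟫_𝕜‖ ^ 2 ≤ ‖w - v‖ ^ 2 := by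
  have hpyth : ‖w‖ ^ 2 = ‖v‖ ^ 2 + ‖w - v‖ ^ 2 := by
    simpa only [sq, add_sub_cancel] using
      norm_add_sq_eq_norm_sq_add_norm_sq_of_inner_eq_zero v (w - v) horth
  rcases eq_or_ne v 0 with rfl | hv₀
  · obtain ⟨u, huK, hu₀⟩ := (Submodule.ne_bot_iff K).1 hK
    refine ⟨(‖u‖⁻¹ : 𝕜) • u, K.smul_mem _ huK, norm_smul_inv_norm hu₀, ?_⟩
    rw [sub_zero, hw]
    nlinarith [norm_nonneg ⟪(‖u‖⁻¹ : 𝕜) • u, w⟫_𝕜]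
  · refine ⟨(‖v‖⁻¹ : 𝕜) • v, K.smul_mem _ hv, norm_smul_inv_norm hv₀, ?_⟩
    have hinner : ⟪v, w⟫_𝕜 = (‖v‖ : 𝕜) ^ 2 := by
      rw [← inner_self_eq_norm_sq_to_K, ← sub_eq_zero, ← inner_sub_right, horth]
    have hnorm : ‖⟪(‖v‖⁻¹ : 𝕜) • v, w⟫_𝕜‖ = ‖v‖ := by
      rw [inner_smul_left, hinner, norm_mul, RCLike.norm_conj, norm_inv, norm_pow,
        RCLike.norm_ofReal, abs_norm]
      field_simp
    rw [hnorm]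
    nlinarith

namespace lp

variable {α F : Type*} [NormedAddCommGroup F]

noncomputable def indicator {p : ENNReal} (S : Set α) (f : lp (fun _ : α => F) p) :
    lp (fun _ : α => F) p :=
  ⟨S.indicator f, (lp.memℓp f).mono' fun i => norm_indicator_le_norm_self f i⟩

@[simp]
theorem coe_indicator {p : ENNReal} (S : Set α) (f : lp (fun _ : α => F) p) :
    ⇑(indicator S f) = S.indicator f :=
  rfl

theorem sub_indicator_compl {p : ENNReal} (S : Set α) (f : lp (fun _ : α => F) p) :
    f - indicator Sᶜ f = indicator S f := by
  ext i
  change f i - Sᶜ.indicator f i = S.indicator f i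
  by_cases hi : i ∈ S <;> simp [hi]

theorem hasSum_norm_sq (f : lp (fun _ : α => F) 2) : HasSum (fun i => ‖f i‖ ^ 2) (‖f‖ ^ 2) := by
  simpa using lp.hasSum_norm (p := 2) (by norm_num) f

theorem norm_indicator_sq (S : Set α) (f : lp (fun _ : α => F) 2) :
    ‖indicator S f‖ ^ 2 = ∑' i, S.indicator (fun i => ‖f i‖ ^ 2) i := by
  rw [← (hasSum_norm_sq _).tsum_eq]
  refine tsum_congr fun i => ?_
  by_cases hi : i ∈ S <;> simp [hi]

variable (𝕜 : Type*) [RCLike 𝕜] [InnerProductSpace 𝕜 F]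

theorem inner_indicator_compl_indicator (S : Set α) (f g : lp (fun _ : α => F) 2) :
    ⟪indicator Sᶜ f, indicator S g⟫_𝕜 = 0 := by
  rw [lp.inner_eq_tsum]
  refine (tsum_congr fun i => ?_).trans tsum_zero
  by_cases hi : i ∈ S <;> simp [hi]

def vanishingOn (S : Set α) : Submodule 𝕜 (lp (fun _ : α => F) 2) where
  carrier := {f | ∀ i ∈ S, f i = 0}
  add_mem' hf hg i hi := by simp [hf i hi, hg i hi]
  zero_mem' i _ := rfl
  smul_mem' c f hf i hi := by simp [hf i hi]

theorem indicator_compl_mem_vanishingOn (S : Set α) (f : lp (fun _ : α => F) 2) :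
    indicator Sᶜ f ∈ vanishingOn 𝕜 S := fun i hi => by simp [hi]

theorem vanishingOn_ne_bot [Nontrivial F] {S : Set α} {i : α} (hi : i ∉ S) :
    vanishingOn 𝕜 (F := F) S ≠ ⊥ := by
  classical
  obtain ⟨a, ha⟩ := exists_ne (0 : F)
  refine (Submodule.ne_bot_iff _).2
    ⟨lp.single (E := fun _ : α => F) 2 i a, fun j hj => ?_, fun h => ha ?_⟩
  · exact lp.single_apply_ne (E := fun _ : α => F) 2 i a (ne_of_mem_of_not_mem hj hi)
  · simpa using congrArg (fun g : lp (fun _ : α => F) 2 => g i) h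

end lp

theorem stmt_9 (ℓ L : ℕ) (hℓ : 0 < ℓ) (hL : ℓ < L)
    (w : lp (fun _ : ℕ => ℂ) 2) (hw : ‖w‖ = 1) :
    ∃ wt : lp (fun _ : ℕ => ℂ) 2, ∃ k : ℕ → ℕ, ‖wt‖ = 1 ∧
      (∀ j : ℕ, j * L ≤ k j ∧ k j + ℓ ≤ (j + 1) * L) ∧
      (∀ (j d : ℕ), k j ≤ d → d < k j + ℓ → wt d = 0) ∧
      Real.sqrt (1 - ‖⟪wt, w⟫_ℂ‖ ^ 2) ≤
        Real.sqrt ((ℓ : ℝ) / ((L : ℝ) - (ℓ : ℝ))) := by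
  have hf := lp.hasSum_norm_sq w
  rw [hw, one_pow] at hf
  obtain ⟨k, hk, hmass⟩ :=
    exists_tsum_indicator_windowUnion_le (fun d => sq_nonneg _) hf.summable hℓ hL.le
  set S := windowUnion ℓ k
  obtain ⟨d, hd⟩ := exists_notMem_windowUnion hk hL
  obtain ⟨wt, hwtS, hwt, hdist⟩ := exists_mem_norm_eq_one_one_sub_norm_inner_sq_le
    (lp.vanishingOn_ne_bot ℂ hd) (lp.indicator_compl_mem_vanishingOn ℂ S w) hw
    (by rw [lp.sub_indicator_compl]; exact lp.inner_indicator_compl_indicator ℂ S w w)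
  refine ⟨wt, k, hwt, hk, fun j d h₁ h₂ => hwtS d (mem_windowUnion.2 ⟨j, h₁, h₂⟩),
    Real.sqrt_le_sqrt ?_⟩
  rw [lp.sub_indicator_compl, lp.norm_indicator_sq] at hdist
  rw [hf.tsum_eq, mul_one] at hmass
  have hLℓ : (0 : ℝ) < L - ℓ := sub_pos.2 (by exact_mod_cast hL)
  rw [le_div_iff₀ hLℓ]
  nlinarith [mul_le_mul_of_nonneg_right hdist hLℓ.le]
end

section
/- Let H be a complex Hilbert space, V a unitary on H, P and Q orthogonal projections on H, p ∈ [0,1] a real number, and w₀, w₁, s₀, s₁ unit vectors in H satisfying Q w₀ = w₀, Q w₁ = 0, P s₀ = 0, P s₁ = s₁, V w₀ = √(1−p) s₀ + √p s₁, and V w₁ = √p s₀ − √(1−p) s₁. On the product Hilbert space H ×₂ H define the controlled-flip operator C(x,y) = ((I−P)x + P y, P x + (I−P) y) and let G = (V† ⊕ V†) ∘ C ∘ (V ⊕ V), where V ⊕ V and V† ⊕ V† act componentwise. Then applying Q componentwise to G(w₀, 0) yields ((1−p)·w₀, p·w₀); consequently ‖(Q ⊕ Q) G(w₀, 0)‖²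 = (1−p)² + p² and ‖G(w₀,0) − (Q ⊕ Q) G(w₀,0)‖² = 2p(1−p). -/
/-!
With `a = √(1-p)` and `b = √p`, `V` maps `w₀, w₁` to `s₀, s₁` through the reflection
matrix `[[a, b], [b, -a]]`, which is its own inverse; hence `V† s₀ = a w₀ + b w₁` and
`V† s₁ = b w₀ - a w₁`. The controlled flip sends `(V w₀, 0) = (a s₀ + b s₁, 0)` to
`(a s₀, b s₁)`, so `G (w₀, 0) = (a² w₀ + ab w₁, b² w₀ - ab w₁)`. Since `Q` keeps `w₀` and kills
`w₁`, what survives `Q ⊕ Q` is `((1-p) w₀, p w₀)`, and the residual `(ab w₁, -ab w₁)` has squared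
norm `2 a² b² = 2p(1-p)`.
-/

section Reflection

variable {R M N F : Type*} [CommRing R] [AddCommGroup M] [Module R M] [AddCommGroup N]
  [Module R N] [FunLike F M N] [LinearMapClass F R M N]
  (f : F) {a b : R} (hab : a * a + b * b = 1) {x₀ x₁ : M} {y₀ y₁ : N}
  (h₀ : f x₀ = a • y₀ + b • y₁) (h₁ : f x₁ = b • y₀ - a • y₁)
include hab h₀ h₁

theorem map_reflection_combination_left : f (a • x₀ + b • x₁) = y₀ := by
  rw [map_add, map_smul, map_smul, h₀, h₁]
  linear_combination (norm := module) hab • y₀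

theorem map_reflection_combination_right : f (b • x₀ - a • x₁) = y₁ := by
  rw [map_sub, map_smul, map_smul, h₀, h₁]
  linear_combination (norm := module) hab • y₁

end Reflection

theorem WithLp.prod_norm_sq_smul_smul {𝕜 E : Type*} [NormedField 𝕜] [SeminormedAddCommGroup E]
    [NormedSpace 𝕜 E] (c d : 𝕜) (w : E) :
    ‖(WithLp.equiv 2 (E × E)).symm (c • w, d • w)‖ ^ 2 = (‖c‖ ^ 2 + ‖d‖ ^ 2) * ‖w‖ ^ 2 := by
  rw [WithLp.prod_norm_sq_eq_of_L2, WithLp.equiv_symm_apply, WithLp.toLp_fst, WithLp.toLp_snd,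
    norm_smul, norm_smul]
  ring

theorem Complex.sq_norm_ofReal (r : ℝ) : ‖(r : ℂ)‖ ^ 2 = r ^ 2 := by
  rw [Complex.norm_real, Real.norm_eq_abs, sq_abs]

theorem stmt_11_general {H : Type*} [NormedAddCommGroup H] [InnerProductSpace ℂ H]
    (V : H ≃ₗᵢ[ℂ] H) (P Q : H →L[ℂ] H)
    (p : ℝ) (hp0 : 0 ≤ p) (hp1 : p ≤ 1)
    (w₀ w₁ s₀ s₁ : H) (hw₀ : ‖w₀‖ = 1) (hw₁ : ‖w₁‖ = 1)
    (hQw₀ : Q w₀ = w₀) (hQw₁ : Q w₁ = 0) (hPs₀ : P s₀ = 0) (hPs₁ : P s₁ = s₁)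
    (hVw₀ : V w₀ = (Real.sqrt (1 - p) : ℂ) • s₀ + (Real.sqrt p : ℂ) • s₁)
    (hVw₁ : V w₁ = (Real.sqrt p : ℂ) • s₀ - (Real.sqrt (1 - p) : ℂ) • s₁) :
    let C : H × H → H × H := fun z => (z.1 - P z.1 + P z.2, P z.1 + (z.2 - P z.2))
    let G : H × H → H × H := fun z =>
      (V.symm (C (V z.1, V z.2)).1, V.symm (C (V z.1, V z.2)).2)
    Q (G (w₀, 0)).1 = ((1 - p : ℝ) : ℂ) • w₀ ∧
    Q (G (w₀, 0)).2 = ((p : ℝ) : ℂ) • w₀ ∧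
    ‖(WithLp.equiv 2 (H × H)).symm (Q (G (w₀, 0)).1, Q (G (w₀, 0)).2)‖ ^ 2
      = (1 - p) ^ 2 + p ^ 2 ∧
    ‖(WithLp.equiv 2 (H × H)).symm ((G (w₀, 0)).1 - Q (G (w₀, 0)).1,
        (G (w₀, 0)).2 - Q (G (w₀, 0)).2)‖ ^ 2 = 2 * p * (1 - p) := by
  intro C G
  set a : ℂ := (Real.sqrt (1 - p) : ℂ)
  set b : ℂ := (Real.sqrt p : ℂ)
  have ha : a * a = ((1 - p : ℝ) : ℂ) := by
    rw [← Complex.ofReal_mul, Real.mul_self_sqrt (by linarith)]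
  have hb : b * b = ((p : ℝ) : ℂ) := by
    rw [← Complex.ofReal_mul, Real.mul_self_sqrt hp0]
  have hab : a * a + b * b = 1 := by rw [ha, hb]; push_cast; ring
  have hVs₀ : V.symm s₀ = a • w₀ + b • w₁ :=
    V.symm_apply_eq.2 (map_reflection_combination_left V hab hVw₀ hVw₁).symm
  have hVs₁ : V.symm s₁ = b • w₀ - a • w₁ :=
    V.symm_apply_eq.2 (map_reflection_combination_right V hab hVw₀ hVw₁).symm
  have hG : G (w₀, 0) =
      (((1 - p : ℝ) : ℂ) • w₀ + (a * b) • w₁, ((p : ℝ) : ℂ) • w₀ - (a * b) • w₁) := by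
    simp only [G, C, map_zero, sub_zero, add_zero, hVw₀, map_add, map_smul, hPs₀, hPs₁, smul_zero,
      zero_add, add_sub_cancel_right, hVs₀, hVs₁]
    ext <;> simp only [smul_add, smul_sub, smul_smul, ha, hb, mul_comm b a]
  have hQG₁ : Q (G (w₀, 0)).1 = ((1 - p : ℝ) : ℂ) • w₀ := by
    rw [hG, map_add, map_smul, map_smul, hQw₀, hQw₁, smul_zero, add_zero]
  have hQG₂ : Q (G (w₀, 0)).2 = ((p : ℝ) : ℂ) • w₀ := by
    rw [hG, map_sub, map_smul, map_smul, hQw₀, hQw₁, smul_zero, sub_zero]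
  refine ⟨hQG₁, hQG₂, ?_, ?_⟩
  · rw [hQG₁, hQG₂, WithLp.prod_norm_sq_smul_smul, hw₀, Complex.sq_norm_ofReal,
      Complex.sq_norm_ofReal, one_pow, mul_one]
  · rw [hQG₁, hQG₂, hG, add_sub_cancel_left, sub_sub_cancel_left, ← neg_smul,
      WithLp.prod_norm_sq_smul_smul, norm_neg, norm_mul, mul_pow, Complex.sq_norm_ofReal,
      Complex.sq_norm_ofReal, Real.sq_sqrt (by linarith), Real.sq_sqrt hp0, hw₁]
    ring

theorem stmt_11 {H : Type*} [NormedAddCommGroup H] [InnerProductSpace ℂ H] [CompleteSpace H]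
    (V : H ≃ₗᵢ[ℂ] H) (P Q : H →L[ℂ] H)
    (hP : IsSelfAdjoint P) (hP2 : IsIdempotentElem P)
    (hQ : IsSelfAdjoint Q) (hQ2 : IsIdempotentElem Q)
    (p : ℝ) (hp0 : 0 ≤ p) (hp1 : p ≤ 1)
    (w₀ w₁ s₀ s₁ : H) (hw₀ : ‖w₀‖ = 1) (hw₁ : ‖w₁‖ = 1) (hs₀ : ‖s₀‖ = 1) (hs₁ : ‖s₁‖ = 1)
    (hQw₀ : Q w₀ = w₀) (hQw₁ : Q w₁ = 0) (hPs₀ : P s₀ = 0) (hPs₁ : P s₁ = s₁)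
    (hVw₀ : V w₀ = (Real.sqrt (1 - p) : ℂ) • s₀ + (Real.sqrt p : ℂ) • s₁)
    (hVw₁ : V w₁ = (Real.sqrt p : ℂ) • s₀ - (Real.sqrt (1 - p) : ℂ) • s₁) :
    let C : H × H → H × H := fun z => (z.1 - P z.1 + P z.2, P z.1 + (z.2 - P z.2))
    let G : H × H → H × H := fun z =>
      (V.symm (C (V z.1, V z.2)).1, V.symm (C (V z.1, V z.2)).2)
    Q (G (w₀, 0)).1 = ((1 - p : ℝ) : ℂ) • w₀ ∧
    Q (G (w₀, 0)).2 = ((p : ℝ) : ℂ) • w₀ ∧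
    ‖(WithLp.equiv 2 (H × H)).symm (Q (G (w₀, 0)).1, Q (G (w₀, 0)).2)‖ ^ 2
      = (1 - p) ^ 2 + p ^ 2 ∧
    ‖(WithLp.equiv 2 (H × H)).symm ((G (w₀, 0)).1 - Q (G (w₀, 0)).1,
        (G (w₀, 0)).2 - Q (G (w₀, 0)).2)‖ ^ 2 = 2 * p * (1 - p) :=
  stmt_11_general V P Q p hp0 hp1 w₀ w₁ s₀ s₁ hw₀ hw₁ hQw₀ hQw₁ hPs₀ hPs₁ hVw₀ hVw₁
end

section
/- Let H be a complex Hilbert space, V a unitary on H, Q an orthogonal projection on H, p ∈ [0,1] a real number, and w₀, w₁, s₀, s₁ unit vectors in H satisfying Q w₀ = w₀, Q w₁ = 0, V w₀ = √(1−p) s₀ + √p s₁, and V w₁ = √p s₀ − √(1−p) s₁. Let R₀ = 2Q − I. Then V R₀ V† s₀ = (1−2p)·s₀ + 2√(p(1−p))·s₁ and V R₀ V† s₁ = 2√(p(1−p))·s₀ − (1−2p)·s₁. -/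
theorem stmt_12 {H : Type*} [NormedAddCommGroup H] [InnerProductSpace ℂ H] [CompleteSpace H]
    (V : H ≃ₗᵢ[ℂ] H) (Q : H →L[ℂ] H)
    (hQ : IsSelfAdjoint Q) (hQ2 : IsIdempotentElem Q)
    (p : ℝ) (hp0 : 0 ≤ p) (hp1 : p ≤ 1)
    (w₀ w₁ s₀ s₁ : H) (hw₀ : ‖w₀‖ = 1) (hw₁ : ‖w₁‖ = 1) (hs₀ : ‖s₀‖ = 1) (hs₁ : ‖s₁‖ = 1)
    (hQw₀ : Q w₀ = w₀) (hQw₁ : Q w₁ = 0)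
    (hVw₀ : V w₀ = (Real.sqrt (1 - p) : ℂ) • s₀ + (Real.sqrt p : ℂ) • s₁)
    (hVw₁ : V w₁ = (Real.sqrt p : ℂ) • s₀ - (Real.sqrt (1 - p) : ℂ) • s₁) :
    V ((2 : ℂ) • Q (V.symm s₀) - V.symm s₀) =
      ((1 - 2*p : ℝ) : ℂ) • s₀ + ((2 * Real.sqrt (p * (1 - p)) : ℝ) : ℂ) • s₁ ∧
    V ((2 : ℂ) • Q (V.symm s₁) - V.symm s₁) =
      ((2 * Real.sqrt (p * (1 - p)) : ℝ) : ℂ) • s₀ - ((1 - 2*p : ℝ) : ℂ) • s₁ := by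
  set a : ℂ := ((Real.sqrt p : ℝ) : ℂ) with ha
  set b : ℂ := ((Real.sqrt (1 - p) : ℝ) : ℂ) with hb
  have ha2 : a * a = (p : ℂ) := by
    rw [ha, ← Complex.ofReal_mul, Real.mul_self_sqrt hp0]
  have hb2 : b * b = 1 - (p : ℂ) := by
    rw [hb, ← Complex.ofReal_mul, Real.mul_self_sqrt (by linarith)]; push_cast; ring
  have hab : a * b = ((Real.sqrt (p * (1 - p)) : ℝ) : ℂ) := by
    rw [ha, hb, ← Complex.ofReal_mul, Real.sqrt_mul hp0]
  have h0 : V.symm s₀ = b • w₀ + a • w₁ := by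
    have h : V (b • w₀ + a • w₁) = s₀ := by
      rw [map_add, map_smul, map_smul, hVw₀, hVw₁]
      match_scalars
      · linear_combination hb2 + ha2
      · ring
    rw [← h, V.symm_apply_apply]
  have h1 : V.symm s₁ = a • w₀ - b • w₁ := by
    have h : V (a • w₀ - b • w₁) = s₁ := by
      rw [map_sub, map_smul, map_smul, hVw₀, hVw₁]
      match_scalars
      · ring
      · linear_combination ha2 + hb2
    rw [← h, V.symm_apply_apply]
  have hQ0 : Q (V.symm s₀) = b • w₀ := by
    rw [h0, map_add, map_smul, map_smul, hQw₀, hQw₁, smul_zero, add_zero]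
  have hQ1 : Q (V.symm s₁) = a • w₀ := by
    rw [h1, map_sub, map_smul, map_smul, hQw₀, hQw₁, smul_zero, sub_zero]
  constructor
  · rw [hQ0, h0]
    have : (2 : ℂ) • b • w₀ - (b • w₀ + a • w₁) = b • w₀ - a • w₁ := by module
    rw [this, map_sub, map_smul, map_smul, hVw₀, hVw₁]
    match_scalars
    · push_cast; linear_combination hb2 - ha2
    · push_cast; linear_combination 2 * hab
  · rw [hQ1, h1]
    have : (2 : ℂ) • a • w₀ - (a • w₀ - b • w₁) = a • w₀ + b • w₁ := by module
    rw [this, map_add, map_smul, map_smul, hVw₀, hVw₁]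
    match_scalars
    · push_cast; linear_combination 2 * hab
    · push_cast; linear_combination ha2 - hb2
end
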